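/- arXiv:1502.02473 — 4 statements merged into one kernel-verified Lean document; each statement's English description precedes it below -/
import Mathlib

section
/- Let H be an m×m Hankel matrix over a field (constant skew diagonals, H = (h_{i+j-1})) of rank at most r < m. Then there exists a nonzero vector y = (y_1,...,y_{r+1}) such that for each k = 0,...,m-r-1, the vector obtained by placing y in positions k+1,...,k+r+1 (and zeros elsewhere) lies in the kernel of H; equivalently, the m-r columns of the banded m×(m-r) matrix Y(y) built from y all lie in ker H. -/
/-!
Let `l` be least such that the first `l + 1` rows of the Hankel matrix (truncated to `m`
columns) are linearly dependent; then `l ≤ r`, the first `l` rows are independent, and a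
dependence `y` is a recurrence `∑ₜ yₜ h(t + n) = 0` valid for `n < m`. Suppose it first fails
at `N ≥ m`. Applying `H` to `y` placed at the shifts `s ≤ m - 1 - l` gives the residual vectors
`(∑ₜ yₜ h(t + i + s))ᵢ`; those with `s ≥ N + 1 - m` vanish on the first `c = N + l + 1 - m`
coordinates and form a triangular, hence independent, family of `m - c` vectors. Projecting
the column space of `H` onto the first `c` coordinates gives the column space of the top `c`
rows, of dimension at least `l`. Rank–nullity then yields `rank H ≥ l + m - c = 2m - 1 - N`,
so the recurrence holds for all `n ≤ 2m - 2 - r`, which is the banded kernel condition.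
-/

open Matrix Module

theorem linearIndependent_of_triangular {ι κ R : Type*} [CommRing R] [IsDomain R]
    [Fintype ι] [LinearOrder ι] (v : ι → κ → R) (p : ι → κ) (hdiag : ∀ i, v i (p i) ≠ 0)
    (hlower : ∀ i j, j < i → v i (p j) = 0) : LinearIndependent R v := by
  classical
  let M : Matrix ι ι R := of fun i j => v i (p j)
  have hM : M.IsUpperTriangular := fun i j hji => hlower i j hji
  have hdet : M.det ≠ 0 := by
    rw [det_of_isUpperTriangular hM]
    exact Finset.prod_ne_zero_iff.mpr fun i _ => hdiag i
  exact .of_comp (LinearMap.funLeft R R p) (linearIndependent_rows_of_det_ne_zero hdet)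

section

variable {F : Type*} [Field F] (h : ℕ → F)

def hankel (k m : ℕ) : Matrix (Fin k) (Fin m) F := of fun i j => h (i + j)

def windowSum {s : ℕ} (y : Fin s → F) (n : ℕ) : F := ∑ t, y t * h (t + n)

/-- The column of the paper's banded matrix `Y(y)` that holds `y` in rows `k, …, k + s - 1`. -/
def bandColumn (m : ℕ) {s : ℕ} (y : Fin s → F) (k : ℕ) : Fin m → F :=
  fun j => ∑ i, if j.1 = k + i.1 then y i else 0

variable {h}

theorem rank_hankel_mono {k k' : ℕ} (hk : k ≤ k') (m : ℕ) :
    (hankel h k m).rank ≤ (hankel h k' m).rank :=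
  rank_submatrix_le (hankel h k' m) (Fin.castLE hk) id

theorem windowSum_extend_castLE {s s' : ℕ} (hs : s ≤ s') (y : Fin s → F) (n : ℕ) :
    windowSum h (Function.extend (Fin.castLE hs) y 0) n = windowSum h y n := by
  refine (Fintype.sum_of_injective _ (Fin.castLE_injective hs) _ _ (fun t ht => ?_)
    (fun t => ?_)).symm
  · rw [Function.extend_apply' _ _ _ ht, Pi.zero_apply, zero_mul]
  · rw [(Fin.castLE_injective hs).extend_apply]
    rfl

theorem hankel_mulVec_bandColumn {m s k : ℕ} (y : Fin s → F) (hk : k + s ≤ m) :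
    hankel h m m *ᵥ bandColumn m y k = fun i : Fin m => windowSum h y (i + k) := by
  funext i
  simp only [mulVec, dotProduct, bandColumn, windowSum, Finset.mul_sum]
  rw [Finset.sum_comm]
  refine Finset.sum_congr rfl fun t _ => ?_
  rw [Finset.sum_eq_single ⟨k + t, by omega⟩]
  · simp [hankel, mul_comm, add_comm, add_left_comm]
  · intro j _ hj
    rw [if_neg fun hjt => hj (Fin.ext hjt), mul_zero]
  · simp

theorem exists_windowSum_eq_zero_of_not_linearIndependent {k m : ℕ}
    (hdep : ¬LinearIndependent F (hankel h k m).row) :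
    ∃ y : Fin k → F, y ≠ 0 ∧ ∀ n < m, windowSum h y n = 0 := by
  obtain ⟨y, hy, t, ht⟩ := Fintype.not_linearIndependent_iff.mp hdep
  refine ⟨y, fun h0 => ht (congrFun h0 t), fun n hn => ?_⟩
  simpa [windowSum, hankel, Finset.sum_apply] using congrFun hy ⟨n, hn⟩

theorem exists_minimal_relation {m r : ℕ} (hr : r < m) (hrank : (hankel h m m).rank ≤ r) :
    ∃ l ≤ r, (hankel h l m).rank = l ∧
      ∃ y : Fin (l + 1) → F, y ≠ 0 ∧ ∀ n < m, windowSum h y n = 0 := by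
  classical
  have hdep : (hankel h (r + 1) m).rank < r + 1 :=
    (rank_hankel_mono (k' := m) hr m).trans_lt (Nat.lt_succ_of_le hrank)
  have hex : ∃ k, (hankel h k m).rank < k := ⟨r + 1, hdep⟩
  obtain ⟨_ | l, hlt, hmin, hle⟩ : ∃ k, (hankel h k m).rank < k ∧
      (∀ j < k, (hankel h j m).rank = j) ∧ k ≤ r + 1 :=
    ⟨Nat.find hex, Nat.find_spec hex,
      fun j hj => le_antisymm (rank_le_height _) (not_lt.mp (Nat.find_min hex hj)),
      Nat.find_min' hex hdep⟩
  · omega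
  refine ⟨l, by omega, hmin l l.lt_succ_self,
    exists_windowSum_eq_zero_of_not_linearIndependent fun hind => ?_⟩
  rw [hind.rank_matrix, Fintype.card_fin] at hlt
  exact hlt.false

theorem le_rank_of_windowSum_ne_zero {l m N : ℕ} {y : Fin (l + 1) → F}
    (hrows : (hankel h l m).rank = l) (hzero : ∀ n < N, windowSum h y n = 0)
    (hN : windowSum h y N ≠ 0) (hmN : m ≤ N) (hNl : N + l < 2 * m) :
    2 * m ≤ (hankel h m m).rank + N + 1 := by
  set c := N + l + 1 - m
  have hcm : c ≤ m := by omega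
  set A := (hankel h m m).mulVecLin
  set π : (Fin m → F) →ₗ[F] (Fin c → F) := LinearMap.funLeft F F (Fin.castLE hcm)
  have hsplit := LinearMap.finrank_range_add_finrank_ker (π.domRestrict (LinearMap.range A))
  have hmap : l ≤ finrank F (LinearMap.range (π.domRestrict (LinearMap.range A))) := by
    have hπA : π ∘ₗ A = (hankel h c m).mulVecLin := rfl
    rw [LinearMap.range_domRestrict, ← LinearMap.range_comp, hπA, ← rank, ← hrows]
    exact rank_hankel_mono (by omega) m
  have hker : m - c ≤ finrank F (LinearMap.ker (π.domRestrict (LinearMap.range A))) := by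
    let z : Fin (m - c) → Fin m → F := fun k i => windowSum h y (i + (m - 1 - l - k))
    have hzA : ∀ k, z k ∈ LinearMap.range A := fun k =>
      ⟨bandColumn m y (m - 1 - l - k), hankel_mulVec_bandColumn y (by omega)⟩
    have hzπ : ∀ k, π (z k) = 0 := fun k => funext fun i =>
      hzero _ (by simp only [Fin.val_castLE]; omega)
    have hz : LinearIndependent F z := by
      refine linearIndependent_of_triangular z (fun k => ⟨c + k, by omega⟩) (fun k => ?_)
        (fun k j hjk => hzero _ ?_)
      · convert hN using 2
        rw [Fin.val_mk]
        omega
      · simp only [Fin.lt_def] at hjk ⊢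
        omega
    let w : Fin (m - c) → LinearMap.ker (π.domRestrict (LinearMap.range A)) :=
      fun k => ⟨⟨z k, hzA k⟩, hzπ k⟩
    have hw : LinearIndependent F w :=
      .of_comp ((LinearMap.range A).subtype ∘ₗ (LinearMap.ker _).subtype) hz
    simpa using hw.fintype_card_le_finrank
  have hA : finrank F (LinearMap.range A) = (hankel h m m).rank := rfl
  omega

theorem exists_windowSum_eq_zero {m r : ℕ} (hr : r < m) (hrank : (hankel h m m).rank ≤ r) :
    ∃ y : Fin (r + 1) → F, y ≠ 0 ∧ ∀ n < 2 * m - 1 - r, windowSum h y n = 0 := by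
  obtain ⟨l, hlr, hrows, y, hy0, hym⟩ := exists_minimal_relation hr hrank
  have hy : ∀ n < 2 * m - 1 - r, windowSum h y n = 0 := by
    intro n
    induction n using Nat.strong_induction_on with
    | _ n ih =>
      intro hn
      by_contra hN
      have hmN : m ≤ n := by
        by_contra! hnm
        exact hN (hym n hnm)
      have := le_rank_of_windowSum_ne_zero hrows (fun k hk => ih k hk (by omega)) hN hmN
        (by omega)
      omega
  have hle : l + 1 ≤ r + 1 := by omega
  refine ⟨Function.extend (Fin.castLE hle) y 0, fun h0 => hy0 (funext fun t => ?_),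
    fun n hn => (windowSum_extend_castLE hle y n).trans (hy n hn)⟩
  rw [← (Fin.castLE_injective hle).extend_apply y 0, h0, Pi.zero_apply, Pi.zero_apply]

end

/-- Let `H` be an `m × m` Hankel matrix over a field
(`H i j = h (i + j)` for scalars `h 0, …, h (2m-2)`, i.e. constant skew diagonals)
of rank at most `r < m`. Then there exists a nonzero vector `y = (y 0, …, y r)`
such that for each shift `k = 0, …, m - r - 1`, the vector obtained by placing
`y` in positions `k, …, k + r` (and zeros elsewhere) lies in the kernel of `H`;
equivalently, all `m - r` columns of the banded matrix `Y(y)` lie in `ker H`. -/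
theorem hankel_kernel_banded {F : Type*} [Field F] (m r : ℕ) (hr : r < m)
    (h : ℕ → F) (H : Matrix (Fin m) (Fin m) F)
    (hH : ∀ i j, H i j = h (i.1 + j.1))
    (hrank : H.rank ≤ r) :
    ∃ y : Fin (r + 1) → F, y ≠ 0 ∧
      ∀ k : ℕ, k ≤ m - r - 1 →
        H.mulVec (fun j => ∑ i : Fin (r + 1), if j.1 = k + i.1 then y i else 0) = 0 := by
  obtain rfl : H = hankel h m m := Matrix.ext hH
  obtain ⟨y, hy0, hy⟩ := exists_windowSum_eq_zero hr hrank
  exact ⟨y, hy0, fun k hk => (hankel_mulVec_bandColumn (k := k) y (by omega)).trans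
    (funext fun i => hy _ (by omega))⟩
end

section
/- Let u ∈ C^{p+1} and y ∈ C^{p+1} satisfy u'y = 1. Then the (2m-p)×(2m+p) matrix whose first 2m-p-1 rows form the banded matrix with y_1,...,y_{p+1} shifting one position right in each successive row (zeros elsewhere, and zeros in the last p+1 columns) and whose last row is (0,...,0, u_1,...,u_{p+1}) has full rank 2m-p. -/
/-!
Since `u'y = 1`, both `y` and `u` are nonzero; let `k_y`, `k_u` be their first nonzero indices.
Row `i` of the banded block then has its leading entry in column `i + k_y`, and the last row in
column `2m - 1 + k_u`, beyond every earlier pivot (which are at most `2m - 2`). So the matrix is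
in row echelon form with a pivot in every row.
-/

theorem exists_ne_zero_forall_lt_eq_zero {α M : Type*} [LinearOrder α] [WellFoundedLT α] [Zero M]
    {f : α → M} {a : α} (ha : f a ≠ 0) : ∃ k, f k ≠ 0 ∧ ∀ j < k, f j = 0 := by
  obtain ⟨k, hk, hmin⟩ := wellFounded_lt.has_min {k | f k ≠ 0} ⟨a, ha⟩
  exact ⟨k, hk, fun j hj => by_contra fun hfj => hmin j hfj hj⟩

namespace Matrix

variable {m n R : Type*}

theorem rank_eq_card_of_isLeadingEntry [Fintype m] [Fintype n] [LinearOrder m] [LinearOrder n]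
    [CommRing R] [IsDomain R] {A : Matrix m n R} {c : m → n} (hc : StrictMono c)
    (hA : ∀ i, A.IsLeadingEntry i (c i)) : A.rank = Fintype.card m := by
  have hpiv : A.IsPivotedBy fun i => (c i : WithTop n) := by
    refine isPivotedBy_iff.2 ⟨(WithTop.coe_strictMono.comp hc).monotone,
      (WithTop.coe_strictMono.comp hc).strictMonoOn _, fun i => ⟨fun j hj => ?_, fun j hj => ?_⟩⟩
    · exact (hA i).1 j (WithTop.coe_lt_coe.1 hj)
    · exact WithTop.coe_injective hj ▸ (hA i).2
  simp [hpiv.rank_eq]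

/-- A row carrying `f` at offset `s` has its leading entry where the first nonzero entry of `f`
lands. -/
theorem isLeadingEntry_of_eq_sum_ite [AddCommMonoid R] {N q : ℕ} {A : Matrix m (Fin N) R} {i : m}
    {f : Fin q → R} {s : ℕ} (hrow : ∀ j, A i j = ∑ k : Fin q, if j.1 = s + k.1 then f k else 0)
    {k₀ : Fin q} (hk₀ : f k₀ ≠ 0) (hf : ∀ k < k₀, f k = 0) {c : Fin N} (hc : c.1 = s + k₀.1) :
    A.IsLeadingEntry i c := by
  refine ⟨fun j hj => ?_, ?_⟩
  · rw [hrow]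
    refine Finset.sum_eq_zero fun k _ => ?_
    split_ifs with hjk
    · exact hf k (Fin.lt_def.2 (by rw [Fin.lt_def] at hj; omega))
    · rfl
  · simp_rw [hrow, hc, add_right_inj, Fin.val_inj, Finset.sum_ite_eq, Finset.mem_univ, if_true]
    exact hk₀

end Matrix

theorem banded_matrix_full_rank_general (m p : ℕ)
    (y u : Fin (p + 1) → ℂ) (huy : ∑ i, u i * y i = 1)
    (M : Matrix (Fin (2 * m - p)) (Fin (2 * m + p)) ℂ)
    (hM : ∀ i j, M i j =
      if i.1 < 2 * m - p - 1 then
        ∑ k : Fin (p + 1), if j.1 = i.1 + k.1 then y k else 0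
      else
        ∑ k : Fin (p + 1), if j.1 = 2 * m - 1 + k.1 then u k else 0) :
    M.rank = 2 * m - p := by
  obtain ⟨i, -, hi⟩ := Finset.exists_ne_zero_of_sum_ne_zero (huy ▸ one_ne_zero)
  obtain ⟨ky, hky, hy⟩ := exists_ne_zero_forall_lt_eq_zero (right_ne_zero_of_mul hi)
  obtain ⟨ku, hku, hu⟩ := exists_ne_zero_forall_lt_eq_zero (left_ne_zero_of_mul hi)
  let pivot : Fin (2 * m - p) → ℕ := fun r =>
    if r.1 < 2 * m - p - 1 then r + ky.1 else 2 * m - 1 + ku.1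
  have hpivot_lt : ∀ r, pivot r < 2 * m + p := fun r => by
    have := ky.isLt; have := ku.isLt; have := r.isLt
    simp only [pivot]; split_ifs <;> omega
  have hpivot_mono : StrictMono pivot := fun r r' hr => by
    have := ky.isLt; have := ku.isLt; have := r'.isLt; rw [Fin.lt_def] at hr
    simp only [pivot]; split_ifs <;> omega
  have hlead : ∀ r, M.IsLeadingEntry r ⟨pivot r, hpivot_lt r⟩ := fun r => by
    by_cases hr : r.1 < 2 * m - p - 1
    · exact Matrix.isLeadingEntry_of_eq_sum_ite (fun j => by rw [hM, if_pos hr]) hky hy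
        (if_pos hr)
    · exact Matrix.isLeadingEntry_of_eq_sum_ite (fun j => by rw [hM, if_neg hr]) hku hu
        (if_neg hr)
  exact (Matrix.rank_eq_card_of_isLeadingEntry (fun _ _ hr => Fin.lt_def.2 (hpivot_mono hr))
    hlead).trans (Fintype.card_fin _)

/-- Let `u, y ∈ ℂ^{p+1}` with `u'y = 1` (so `y ≠ 0` and `u ≠ 0`).
The `(2m - p) × (2m + p)` matrix whose first `2m - p - 1` rows form the banded block
with `y 0, …, y p` in columns `i, …, i + p` of row `i` (zeros elsewhere, in particular
zeros in the last `p + 1` columns) and whose last row is `(0, …, 0, u 0, …, u p)`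
has full rank `2m - p`. -/
theorem banded_matrix_full_rank (m p : ℕ) (hm : 1 ≤ m) (hp : p ≤ m - 1)
    (y u : Fin (p + 1) → ℂ) (huy : ∑ i, u i * y i = 1)
    (M : Matrix (Fin (2 * m - p)) (Fin (2 * m + p)) ℂ)
    (hM : ∀ i j, M i j =
      if i.1 < 2 * m - p - 1 then
        ∑ k : Fin (p + 1), if j.1 = i.1 + k.1 then y k else 0
      else
        ∑ k : Fin (p + 1), if j.1 = 2 * m - 1 + k.1 then u k else 0) :
    M.rank = 2 * m - p :=
  banded_matrix_full_rank_general m p y u huy M hM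
end

section
/- Let f = (f_1,...,f_c) be polynomials in variables (x,y) with c ≤ n + k (x of length n, y of length k) such that Jac f has rank c at every zero, so V = Z(f) is smooth equidimensional of codimension c. Let C' be a connected component of V ∩ R^{n+k} and suppose β is in the boundary of π_1(C'), where π_1(x,y) = x_1. Then every point (x,y) ∈ C' with x_1 = β is a critical point of the restriction of π_1 to V, i.e., the matrix obtained by appending the row e_1 = (1,0,...,0) to Jac f(x,y) has rank ≤ c. -/
/-! If the Jacobian of `f` augmented by `e₁` had rank `c + 1` at `x`, the map `y ↦ (f y, y₁)`
would be a submersion at `x`. The implicit function theorem then gives a continuous local section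
of it over the line `0 × ℝ`: an arc through `x` inside `Z` along which `y₁` takes every value
near `β`. Being connected, the arc lies in `C'`, so `π₁ '' C'` is a neighbourhood of `β`. -/

open MvPolynomial

/-- Complex Jacobian matrix of a real polynomial system at a complex point. -/
noncomputable def polyJacobianC (N c : ℕ) (f : Fin c → MvPolynomial (Fin N) ℝ)
    (x : Fin N → ℂ) : Matrix (Fin c) (Fin N) ℂ :=
  fun i j => aeval x (pderiv j (f i))

/-- Real Jacobian of `f` augmented by the row `e₁ = (1, 0, …, 0)`. -/
noncomputable def polyJacobianAugR (N c : ℕ) (hN : 0 < N)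
    (f : Fin c → MvPolynomial (Fin N) ℝ) (x : Fin N → ℝ) :
    Matrix (Fin (c + 1)) (Fin N) ℝ :=
  fun i j =>
    if hi : i.1 < c then eval x (pderiv j (f ⟨i.1, hi⟩)) else if j = ⟨0, hN⟩ then 1 else 0

open Filter Topology Metric

namespace MvPolynomial

variable {𝕜 σ ι : Type*} [NontriviallyNormedField 𝕜] [Fintype σ]

theorem hasStrictFDerivAt_eval (p : MvPolynomial σ 𝕜) (x : σ → 𝕜) :
    HasStrictFDerivAt (fun y => eval y p)
      (∑ j, eval x (pderiv j p) • (ContinuousLinearMap.proj j : (σ → 𝕜) →L[𝕜] 𝕜)) x := by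
  induction p using MvPolynomial.induction_on with
  | C a =>
    simp only [eval_C, pderiv_C, map_zero]
    exact (hasStrictFDerivAt_const a x).congr_fderiv (by ext; simp)
  | add p q hp hq =>
    simp only [map_add]
    refine (hp.add hq).congr_fderiv ?_
    ext v
    simp [add_mul, Finset.sum_add_distrib]
  | mul_X p i hp =>
    classical
    simp only [map_mul, eval_X]
    refine (hp.mul (hasStrictFDerivAt_apply i x)).congr_fderiv ?_
    ext v
    simp [pderiv_X, Pi.single_apply, mul_add, apply_ite (eval x), Finset.sum_add_distrib,
      Finset.mul_sum, mul_comm, mul_left_comm]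

noncomputable def jacobian {R : Type*} [CommSemiring R] (g : ι → MvPolynomial σ R) (x : σ → R) :
    Matrix ι σ R :=
  Matrix.of fun i j => eval x (pderiv j (g i))

theorem hasStrictFDerivAt_eval_pi [CompleteSpace 𝕜] (g : ι → MvPolynomial σ 𝕜) (x : σ → 𝕜) :
    HasStrictFDerivAt (fun y i => eval y (g i))
      (LinearMap.toContinuousLinearMap (jacobian g x).mulVecLin) x := by
  refine hasStrictFDerivAt_pi'' fun i => (hasStrictFDerivAt_eval (g i) x).congr_fderiv ?_
  ext v
  simp [jacobian, Matrix.mulVec, dotProduct]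

end MvPolynomial

theorem Matrix.range_mulVecLin_eq_top_of_card_le_rank {K m n : Type*} [Field K] [Fintype m]
    [Fintype n] {A : Matrix m n K} (hA : Fintype.card m ≤ A.rank) :
    LinearMap.range A.mulVecLin = ⊤ :=
  Submodule.eq_top_of_finrank_eq <| by
    rw [Module.finrank_fintype_fun_eq_card]
    exact le_antisymm A.rank_le_card_height hA

section LocalSection

variable {𝕜 E F : Type*} [NontriviallyNormedField 𝕜] [CompleteSpace 𝕜] [NormedAddCommGroup E]
  [NormedSpace 𝕜 E] [CompleteSpace E] [NormedAddCommGroup F] [NormedSpace 𝕜 F]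
  [FiniteDimensional 𝕜 F] {f : E → F} {f' : E →L[𝕜] F} {a : E}

theorem HasStrictFDerivAt.exists_continuousOn_rightInverse (hf : HasStrictFDerivAt f f' a)
    (hf' : f'.range = ⊤) :
    ∃ s : F → E, ∃ U ∈ 𝓝 (f a), ContinuousOn s U ∧ s (f a) = a ∧ ∀ y ∈ U, f (s y) = y := by
  set e := hf.implicitToOpenPartialHomeomorph f f' hf'
  have hzero : Continuous fun y : F => (y, (0 : f'.ker)) := by fun_prop
  have htarget : {y | (y, (0 : f'.ker)) ∈ e.target} ∈ 𝓝 (f a) :=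
    hzero.continuousAt.preimage_mem_nhds
      (e.open_target.mem_nhds (hf.mem_implicitToOpenPartialHomeomorph_target hf'))
  have hsection : ∀ᶠ y in 𝓝 (f a), f (hf.implicitFunction f f' hf' y 0) = y :=
    hzero.continuousAt.eventually (hf.map_implicitFunction_eq hf')
  refine ⟨fun y => hf.implicitFunction f f' hf' y 0, _, inter_mem htarget hsection,
    ?_, hf.implicitFunction_apply_image hf', fun y hy => hy.2⟩
  exact e.continuousOn_symm.comp hzero.continuousOn fun y hy => hy.1

end LocalSection

section AugmentedSystem

variable {N c : ℕ} (hN : 0 < N)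

noncomputable def augmentedSystem {R : Type*} [CommSemiring R]
    (f : Fin c → MvPolynomial (Fin N) R) : Fin (c + 1) → MvPolynomial (Fin N) R :=
  Fin.snoc f (X ⟨0, hN⟩)

theorem eval_augmentedSystem_eq_single_iff {R : Type*} [CommSemiring R]
    (f : Fin c → MvPolynomial (Fin N) R) (y : Fin N → R) (t : R) :
    (fun i => eval y (augmentedSystem hN f i)) =
        Pi.single (Fin.last c) t ↔ (∀ i, eval y (f i) = 0) ∧ y ⟨0, hN⟩ = t := by
  rw [funext_iff, Fin.forall_fin_succ']
  simp [augmentedSystem, Fin.castSucc_ne_last, and_comm]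

variable (f : Fin c → MvPolynomial (Fin N) ℝ)

theorem polyJacobianAugR_eq_jacobian (x : Fin N → ℝ) :
    polyJacobianAugR N c hN f x = jacobian (augmentedSystem hN f) x := by
  ext i j
  refine Fin.lastCases ?_ (fun i => ?_) i
  · simp [augmentedSystem, polyJacobianAugR, jacobian, pderiv_X, Pi.single_apply, eq_comm]
  · simp [augmentedSystem, polyJacobianAugR, jacobian]

theorem coord_mem_interior_image_connectedComponentIn {x : Fin N → ℝ}
    (hx : ∀ i, eval x (f i) = 0) (hrank : c < (polyJacobianAugR N c hN f x).rank) :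
    x ⟨0, hN⟩ ∈ interior
      ((fun y => y ⟨0, hN⟩) '' connectedComponentIn {y | ∀ i, eval y (f i) = 0} x) := by
  set g := augmentedSystem hN f
  have hsurj : (LinearMap.toContinuousLinearMap (jacobian g x).mulVecLin).range = ⊤ := by
    rw [← polyJacobianAugR_eq_jacobian]
    exact Matrix.range_mulVecLin_eq_top_of_card_le_rank (by simpa using hrank)
  obtain ⟨s, U, hU, hs, hsx, hsU⟩ :=
    (hasStrictFDerivAt_eval_pi g x).exists_continuousOn_rightInverse hsurj
  set γ : ℝ → Fin (c + 1) → ℝ := fun t => Pi.single (Fin.last c) t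
  have hγx : γ (x ⟨0, hN⟩) = fun i => eval x (g i) :=
    ((eval_augmentedSystem_eq_single_iff hN f x _).2 ⟨hx, rfl⟩).symm
  have hγ : Continuous γ := continuous_single (A := fun _ => ℝ) (Fin.last c)
  obtain ⟨ε, hε, hball⟩ := Metric.mem_nhds_iff.1 <|
    hγ.continuousAt.preimage_mem_nhds (hγx ▸ hU)
  have hlift : ∀ t ∈ ball (x ⟨0, hN⟩) ε,
      (∀ i, eval (s (γ t)) (f i) = 0) ∧ s (γ t) ⟨0, hN⟩ = t :=
    fun t ht => (eval_augmentedSystem_eq_single_iff hN f _ t).1 (hsU _ (hball ht))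
  have hcomponent : s ∘ γ '' ball (x ⟨0, hN⟩) ε ⊆
      connectedComponentIn {y | ∀ i, eval y (f i) = 0} x := by
    refine (isPreconnected_ball.image _ ?_).subset_connectedComponentIn ?_ ?_
    · exact hs.comp hγ.continuousOn hball
    · exact ⟨x ⟨0, hN⟩, mem_ball_self hε, by simp [hγx, hsx]⟩
    · rintro _ ⟨t, ht, rfl⟩
      exact (hlift t ht).1
  refine mem_interior.2 ⟨ball (x ⟨0, hN⟩) ε, fun t ht => ?_, isOpen_ball, mem_ball_self hε⟩
  exact ⟨s (γ t), hcomponent ⟨t, ht, rfl⟩, (hlift t ht).2⟩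

end AugmentedSystem

theorem boundary_points_are_critical_general (n k c : ℕ) (h0 : 0 < n + k)
    (f : Fin c → MvPolynomial (Fin (n + k)) ℝ)
    (Z : Set (Fin (n + k) → ℝ)) (hZ : Z = {x | ∀ i, eval x (f i) = 0})
    (z : Fin (n + k) → ℝ)
    (C' : Set (Fin (n + k) → ℝ)) (hC' : C' = connectedComponentIn Z z)
    (β : ℝ) (hβ : β ∈ frontier ((fun x => x ⟨0, h0⟩) '' C')) :
    ∀ x ∈ C', x ⟨0, h0⟩ = β →
      (polyJacobianAugR (n + k) c h0 f x).rank ≤ c := by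
  intro x hx hx1
  by_contra! hrank
  subst hZ hC'
  refine hβ.2 ?_
  rw [← hx1, connectedComponentIn_eq hx]
  exact coord_mem_interior_image_connectedComponentIn h0 f (connectedComponentIn_subset _ _ hx)
    hrank

/-- Let `f = (f_1, …, f_c)` be polynomials in variables `(x, y)`
(`x` of length `n`, `y` of length `k`, `c ≤ n + k`) such that `Jac f` has rank `c`
at every zero, so `V = Z(f)` is smooth and equidimensional of codimension `c`.
Let `C'` be a connected component of `V ∩ ℝ^{n+k}` and suppose `β` lies in the
boundary of `π₁(C')`, where `π₁(x, y) = x₁`.  Then every point `(x, y) ∈ C'` with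
`x₁ = β` is a critical point of the restriction of `π₁` to `V`: the matrix obtained
by appending the row `e₁ = (1, 0, …, 0)` to `Jac f(x, y)` has rank at most `c`. -/
theorem boundary_points_are_critical (n k c : ℕ) (hc : c ≤ n + k) (h0 : 0 < n + k)
    (f : Fin c → MvPolynomial (Fin (n + k)) ℝ)
    (hreg : ∀ x : Fin (n + k) → ℂ, (∀ i, aeval x (f i) = 0) →
      (polyJacobianC (n + k) c f x).rank = c)
    (Z : Set (Fin (n + k) → ℝ)) (hZ : Z = {x | ∀ i, eval x (f i) = 0})
    (z : Fin (n + k) → ℝ) (hz : z ∈ Z)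
    (C' : Set (Fin (n + k) → ℝ)) (hC' : C' = connectedComponentIn Z z)
    (β : ℝ) (hβ : β ∈ frontier ((fun x => x ⟨0, h0⟩) '' C')) :
    ∀ x ∈ C', x ⟨0, h0⟩ = β →
      (polyJacobianAugR (n + k) c h0 f x).rank ≤ c :=
  boundary_points_are_critical_general n k c h0 f Z hZ z C' hC' β hβ
end

section
/- The sum of the coefficients of the polynomial (s_X + s_Y)^{2m-p-1} (s_Y + s_Z)^{n-1} (s_X + s_Z)^p reduced modulo the ideal ⟨s_X^{n+1}, s_Y^{p+1}, s_Z^{2m-p-1}⟩ equals δ(m,n,p) = Σ_ℓ C(2m-p-1, n-ℓ) · C(n-1, 2m-2p-2+ℓ) · C(p, ℓ), where ℓ ranges over max{0, n-2m+p+1} ≤ ℓ ≤ min{p, n-2m+2p+1}. -/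
/-!
The polynomial is homogeneous of degree `(2m-p-1) + (n-1) + p = n + p + (2m-p-2)`, which is
exactly the degree of the corner `s_X^n s_Y^p s_Z^(2m-p-2)` of the box of surviving monomials;
every other monomial in the box has smaller degree, so the sum of the coefficients is the single
coefficient at the corner. Expanding the three binomials, a term `s_X^k s_Z^(p-k)` of the last
factor fixes the exponents taken from the other two, which gives the summand of `δ(m,n,p)`
indexed by `k`.
-/

open MvPolynomial Finset

/-- The multilinear Bézout number
`δ(m,n,p) = Σ_ℓ C(2m-p-1, n-ℓ)·C(n-1, 2m-2p-2+ℓ)·C(p, ℓ)`, the sum ranging over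
`max {0, n-2m+p+1} ≤ ℓ ≤ min {p, n-2m+2p+1}` (truncated subtraction realizes the max). -/
def hdelta (m n p : ℕ) : ℕ :=
  ∑ ℓ ∈ Finset.Icc (n + p + 1 - 2 * m) (min p (n + 2 * p + 1 - 2 * m)),
    Nat.choose (2 * m - p - 1) (n - ℓ) *
      Nat.choose (n - 1) (2 * m - 2 * p - 2 + ℓ) * Nat.choose p ℓ

variable {R : Type*} [CommSemiring R]

theorem degree_single_add_single_add_single (a b c : ℕ) :
    (Finsupp.single (0 : Fin 3) a + Finsupp.single 1 b + Finsupp.single 2 c).degree =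
      a + b + c := by
  simp only [map_add, Finsupp.degree_single]

theorem single_add_single_add_single_inj {a b c a' b' c' : ℕ} :
    Finsupp.single (0 : Fin 3) a + Finsupp.single 1 b + Finsupp.single 2 c =
        Finsupp.single 0 a' + Finsupp.single 1 b' + Finsupp.single 2 c' ↔
      a = a' ∧ b = b' ∧ c = c' := by
  refine ⟨fun h => ⟨?_, ?_, ?_⟩, by rintro ⟨rfl, rfl, rfl⟩; rfl⟩
  · simpa using DFunLike.congr_fun h 0
  · simpa using DFunLike.congr_fun h 1
  · simpa using DFunLike.congr_fun h 2

theorem sum_coeff_box_eq_coeff_corner {φ : MvPolynomial (Fin 3) R} {N₀ N₁ N₂ : ℕ}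
    (hφ : φ.IsHomogeneous (N₀ + N₁ + N₂)) :
    ∑ a ∈ range (N₀ + 1), ∑ b ∈ range (N₁ + 1), ∑ c ∈ range (N₂ + 1),
        coeff (Finsupp.single 0 a + Finsupp.single 1 b + Finsupp.single 2 c) φ =
      coeff (Finsupp.single 0 N₀ + Finsupp.single 1 N₁ + Finsupp.single 2 N₂) φ := by
  have hlow : ∀ a b c, a + b + c < N₀ + N₁ + N₂ →
      coeff (Finsupp.single 0 a + Finsupp.single 1 b + Finsupp.single 2 c) φ = 0 :=
    fun a b c h => hφ.coeff_eq_zero (by rw [degree_single_add_single_add_single]; omega)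
  rw [sum_eq_single_of_mem N₀ (self_mem_range_succ N₀) fun a ha ha' =>
      sum_eq_zero fun b hb => sum_eq_zero fun c hc => hlow a b c ?_,
    sum_eq_single_of_mem N₁ (self_mem_range_succ N₁) fun b hb hb' =>
      sum_eq_zero fun c hc => hlow N₀ b c ?_,
    sum_eq_single_of_mem N₂ (self_mem_range_succ N₂) fun c hc hc' => hlow N₀ N₁ c ?_]
  all_goals simp only [mem_range] at *; omega

theorem X_add_X_pow {σ : Type*} (u v : σ) (e : ℕ) :
    (X u + X v : MvPolynomial σ R) ^ e =
      ∑ i ∈ range (e + 1),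
        monomial (Finsupp.single u i + Finsupp.single v (e - i)) (e.choose i : R) := by
  rw [add_pow]
  refine sum_congr rfl fun i _ => ?_
  rw [X_pow_eq_monomial, X_pow_eq_monomial, monomial_mul, mul_one, mul_comm,
    ← map_natCast C, C_mul_monomial, mul_one]

theorem isHomogeneous_X_add_X_pow {σ : Type*} (u v : σ) (e : ℕ) :
    ((X u + X v : MvPolynomial σ R) ^ e).IsHomogeneous e := by
  simpa using ((isHomogeneous_X R u).add (isHomogeneous_X R v)).pow e

theorem coeff_X_add_X_pow_mul_X_add_X_pow_mul_X_add_X_pow (A B C a b c : ℕ) :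
    coeff (Finsupp.single 0 a + Finsupp.single 1 b + Finsupp.single 2 c)
        ((X 0 + X 1) ^ A * (X 1 + X 2) ^ B * (X 0 + X 2) ^ C : MvPolynomial (Fin 3) R) =
      ∑ k ∈ range (C + 1), ∑ i ∈ range (A + 1), ∑ j ∈ range (B + 1),
        if i + k = a ∧ A - i + (B - j) = b ∧ j + (C - k) = c then
          (A.choose i * B.choose j * C.choose k : R) else 0 := by
  rw [add_comm (X 1), X_add_X_pow, X_add_X_pow, X_add_X_pow, sum_mul_sum, sum_mul_sum, sum_comm]
  simp only [sum_mul, coeff_sum, monomial_mul, coeff_monomial]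
  refine sum_congr rfl fun k _ => sum_congr rfl fun i _ => sum_congr rfl fun j _ => ?_
  have hexp : Finsupp.single 0 i + Finsupp.single 1 (A - i) +
      (Finsupp.single 2 j + Finsupp.single 1 (B - j)) +
        (Finsupp.single 0 k + Finsupp.single 2 (C - k)) =
      Finsupp.single (0 : Fin 3) (i + k) + Finsupp.single 1 (A - i + (B - j)) +
        Finsupp.single 2 (j + (C - k)) := by
    simp only [Finsupp.single_add]
    abel
  simp only [hexp, single_add_single_add_single_inj]

theorem coeff_X_add_X_pow_mul_X_add_X_pow_mul_X_add_X_pow_of_add_add_eq {A B C a b c : ℕ}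
    (h : a + b + c = A + B + C) (hC : C ≤ c) :
    coeff (Finsupp.single 0 a + Finsupp.single 1 b + Finsupp.single 2 c)
        ((X 0 + X 1) ^ A * (X 1 + X 2) ^ B * (X 0 + X 2) ^ C : MvPolynomial (Fin 3) R) =
      ∑ k ∈ range (a + 1), (A.choose (a - k) * B.choose (c - C + k) * C.choose k : R) := by
  have hslice : ∀ k ∈ range (C + 1), (∑ i ∈ range (A + 1), ∑ j ∈ range (B + 1),
        if i + k = a ∧ A - i + (B - j) = b ∧ j + (C - k) = c then
          (A.choose i * B.choose j * C.choose k : R) else 0) =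
      if k ≤ a then (A.choose (a - k) * B.choose (c - C + k) * C.choose k : R) else 0 := by
    intro k hk
    have hcond : ∀ i ∈ range (A + 1), ∀ j ∈ range (B + 1),
        (i + k = a ∧ A - i + (B - j) = b ∧ j + (C - k) = c) ↔
          k ≤ a ∧ i = a - k ∧ j = c - C + k := by
      intro i hi j hj
      simp only [mem_range] at hi hj hk
      omega
    rw [sum_congr rfl fun i hi => sum_congr rfl fun j hj => if_congr (hcond i hi j hj) rfl rfl]
    simp only [ite_and, sum_ite_irrel, sum_const_zero, sum_ite_eq', mem_range]
    split_ifs with hka hi hj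
    · rfl
    · rw [Nat.choose_eq_zero_of_lt (by omega : B < c - C + k), Nat.cast_zero, mul_zero, zero_mul]
    · rw [Nat.choose_eq_zero_of_lt (by omega : A < a - k), Nat.cast_zero, zero_mul, zero_mul]
    · rfl
  rw [coeff_X_add_X_pow_mul_X_add_X_pow_mul_X_add_X_pow, sum_congr rfl hslice, ← sum_filter]
  refine sum_subset (fun k hk => ?_) fun k hk hk' => ?_
  · simp only [mem_filter, mem_range] at hk ⊢
    omega
  · simp only [mem_filter, mem_range, not_and, not_le] at hk hk'
    rw [Nat.choose_eq_zero_of_lt (by omega : C < k), Nat.cast_zero, mul_zero]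

theorem hdelta_eq_sum_range {m n p : ℕ} (hpm : p < m) :
    hdelta m n p = ∑ k ∈ range (n + 1),
      (2 * m - p - 1).choose (n - k) * (n - 1).choose (2 * m - 2 * p - 2 + k) * p.choose k := by
  refine sum_subset (fun k hk => ?_) fun k hk hk' => ?_
  · simp only [mem_Icc, mem_range] at hk ⊢
    omega
  · simp only [mem_Icc, mem_range, not_and_or, not_le] at hk hk'
    obtain hlow | hp | hhigh :
        2 * m - p - 1 < n - k ∨ p < k ∨ n - 1 < 2 * m - 2 * p - 2 + k := by omega
    · rw [Nat.choose_eq_zero_of_lt hlow, zero_mul, zero_mul]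
    · rw [Nat.choose_eq_zero_of_lt hp, mul_zero]
    · rw [Nat.choose_eq_zero_of_lt hhigh, mul_zero, zero_mul]

theorem coeff_sum_eq_hdelta_general (m n p : ℕ) (hm : 0 < m) (hn : 0 < n)
    (hpm : p ≤ m - 1) :
    ∑ a ∈ Finset.range (n + 1), ∑ b ∈ Finset.range (p + 1),
      ∑ c ∈ Finset.range (2 * m - p - 1),
        MvPolynomial.coeff
          (Finsupp.single 0 a + Finsupp.single 1 b + Finsupp.single 2 c)
          (((X 0 + X 1) ^ (2 * m - p - 1) * (X 1 + X 2) ^ (n - 1) *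
              (X 0 + X 2) ^ p : MvPolynomial (Fin 3) ℚ))
      = (hdelta m n p : ℚ) := by
  have hhom : ((X 0 + X 1) ^ (2 * m - p - 1) * (X 1 + X 2) ^ (n - 1) * (X 0 + X 2) ^ p :
      MvPolynomial (Fin 3) ℚ).IsHomogeneous (n + p + (2 * m - p - 2)) := by
    rw [show n + p + (2 * m - p - 2) = 2 * m - p - 1 + (n - 1) + p by omega]
    exact ((isHomogeneous_X_add_X_pow 0 1 _).mul (isHomogeneous_X_add_X_pow 1 2 _)).mul
      (isHomogeneous_X_add_X_pow 0 2 _)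
  have hbox := sum_coeff_box_eq_coeff_corner hhom
  rw [show 2 * m - p - 2 + 1 = 2 * m - p - 1 by omega] at hbox
  rw [hbox, coeff_X_add_X_pow_mul_X_add_X_pow_mul_X_add_X_pow_of_add_add_eq (by omega) (by omega),
    hdelta_eq_sum_range (by omega), show 2 * m - p - 2 - p = 2 * m - 2 * p - 2 by omega]
  push_cast
  rfl

/-- The sum of the coefficients of the polynomial
`(s_X + s_Y)^{2m-p-1} (s_Y + s_Z)^{n-1} (s_X + s_Z)^p` reduced modulo the ideal
`⟨s_X^{n+1}, s_Y^{p+1}, s_Z^{2m-p-1}⟩` (i.e. the sum of the coefficients of the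
monomials `s_X^a s_Y^b s_Z^c` with `a ≤ n`, `b ≤ p`, `c ≤ 2m-p-2`) equals
`δ(m,n,p)`. -/
theorem coeff_sum_eq_hdelta (m n p : ℕ) (hm : 0 < m) (hn : 0 < n) (hp : 0 < p)
    (hpm : p ≤ m - 1) :
    ∑ a ∈ Finset.range (n + 1), ∑ b ∈ Finset.range (p + 1),
      ∑ c ∈ Finset.range (2 * m - p - 1),
        MvPolynomial.coeff
          (Finsupp.single 0 a + Finsupp.single 1 b + Finsupp.single 2 c)
          (((X 0 + X 1) ^ (2 * m - p - 1) * (X 1 + X 2) ^ (n - 1) *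
              (X 0 + X 2) ^ p : MvPolynomial (Fin 3) ℚ))
      = (hdelta m n p : ℚ) :=
  coeff_sum_eq_hdelta_general m n p hm hn hpm
end
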